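/- Let γ ∈ ℝ and θ ∈ (0, π/2], and let I = {(0, r·sin ψ, r·cos ψ) : γ − θ < ψ < γ + θ} be an open arc on the time-zero circle of dS of length 2θr ≤ πr, with causal completion O_I = I″. Then the intersection of all wedges containing O_I equals O_I itself: ⋂ {Λ·W₁ : Λ ∈ SO₀(1,2), O_I ⊆ Λ·W₁} = O_I. -/
import Mathlib


/-- The Minkowski form `⟨x,y⟩ = x₀y₀ − x₁y₁ − x₂y₂` on `ℝ³`. -/
def mink (x y : Fin 3 → ℝ) : ℝ := x 0 * y 0 - x 1 * y 1 - x 2 * y 2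

/-- The two-dimensional de Sitter space `dS = {x ∈ ℝ³ : ⟨x,x⟩ = −r²}`. -/
def deSitter (r : ℝ) : Set (Fin 3 → ℝ) := {x | mink x x = -r ^ 2}

/-- Two points are spacelike separated if `⟨x−y, x−y⟩ < 0`. -/
def SpacelikeSep (x y : Fin 3 → ℝ) : Prop := mink (x - y) (x - y) < 0

/-- The causal complement `X′ = {y ∈ dS : y spacelike separated from every x ∈ X}`. -/
def causalCompl (r : ℝ) (X : Set (Fin 3 → ℝ)) : Set (Fin 3 → ℝ) :=
  {y | y ∈ deSitter r ∧ ∀ x ∈ X, SpacelikeSep x y}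

/-- The wedge `W₁ = {x ∈ dS : x₂ > |x₀|}`. -/
def wedge1 (r : ℝ) : Set (Fin 3 → ℝ) := {x | x ∈ deSitter r ∧ |x 0| < x 2}

/-- The rotation `R₀(α)`. -/
noncomputable def rot (α : ℝ) : Matrix (Fin 3) (Fin 3) ℝ :=
  !![1, 0, 0; 0, Real.cos α, -Real.sin α; 0, Real.sin α, Real.cos α]

/-- The boost `Λ₁(t)`. -/
noncomputable def boost (t : ℝ) : Matrix (Fin 3) (Fin 3) ℝ :=
  !![Real.cosh t, 0, Real.sinh t; 0, 1, 0; Real.sinh t, 0, Real.cosh t]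

/-- The Minkowski metric matrix `η = diag(1,−1,−1)`. -/
def minkMatrix : Matrix (Fin 3) (Fin 3) ℝ := !![1, 0, 0; 0, -1, 0; 0, 0, -1]

/-- `SO₀(1,2)`: real 3×3 matrices with `ΛᵀηΛ = η`, `det Λ = 1`, `Λ₀₀ > 0`. -/
def SOplus : Set (Matrix (Fin 3) (Fin 3) ℝ) :=
  {Λ | Λ.transpose * minkMatrix * Λ = minkMatrix ∧ Λ.det = 1 ∧ 0 < Λ 0 0}

open Real Set Filter

lemma lemA (r T W a b m n : ℝ) (hr : 0 < r) (hT : 0 ≤ T) (hTa : T < a) (hb : 0 ≤ b)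
    (hm : 0 ≤ m) (hn : n ≤ r) (hW : 0 ≤ W) (h1 : a^2 + b^2 = T^2 + r^2)
    (h2 : m^2 + n^2 = W^2 + r^2) (hK : 0 ≤ a*n + b*m) :
    b*n - a*m + T*W < r^2 := by
  have ha : 0 < a := lt_of_le_of_lt hT hTa
  have hbr : b < r := by nlinarith
  rcases le_or_gt 0 n with hn0 | hn0
  · have hWm : W ≤ m := by
      by_contra hc; push_neg at hc; nlinarith
    have e1 : T*W ≤ T*m := mul_le_mul_of_nonneg_left hWm hT
    have e2 : T*m ≤ a*m := mul_le_mul_of_nonneg_right hTa.le hm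
    have e3 : b*n ≤ b*r := mul_le_mul_of_nonneg_left hn hb
    have e4 : b*r < r*r := mul_lt_mul_of_pos_right hbr hr
    nlinarith
  · have hbn : b*n ≤ 0 := mul_nonpos_of_nonneg_of_nonpos hb hn0.le
    have ham : 0 ≤ a*m := mul_nonneg ha.le hm
    have hG : 0 < r^2 + a*m - b*n := by nlinarith
    have kle : a*n + b*m ≤ b*m := by nlinarith [mul_neg_of_pos_of_neg ha hn0]
    have k1 : (a*n + b*m)^2 ≤ (b*m)^2 := pow_le_pow_left₀ hK kle 2
    have k2 : 0 < b - n := by linarith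
    have hb2 : b^2 < r^2 := by nlinarith
    have d2 : r^2*m^2 ≤ r^2*(a+m)^2 := by nlinarith [mul_nonneg ham (by linarith : (0:ℝ) ≤ a + 2*m), sq_nonneg r]
    have d3 : b^2*m^2 ≤ r^2*m^2 := mul_le_mul_of_nonneg_right hb2.le (sq_nonneg m)
    have d4 : 0 < r^2*(b-n)^2 := by positivity
    have hEpos : 0 < r^2*((a+m)^2 + (b-n)^2) - (a*n + b*m)^2 := by nlinarith
    have hT2 : T^2 = a^2 + b^2 - r^2 := by linarith
    have hW2 : W^2 = m^2 + n^2 - r^2 := by linarith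
    have hE : (T*W)^2 < (r^2 + a*m - b*n)^2 := by
      have h0 : (T*W)^2 = (a^2+b^2-r^2)*(m^2+n^2-r^2) := by rw [mul_pow, hT2, hW2]
      have hid : (r^2 + a*m - b*n)^2 - (a^2+b^2-r^2)*(m^2+n^2-r^2)
          = r^2*((a+m)^2 + (b-n)^2) - (a*n + b*m)^2 := by ring
      rw [h0]; linarith
    have := lt_of_pow_lt_pow_left₀ 2 hG.le hE
    linarith
lemma rot_mulVec (α : ℝ) (v : Fin 3 → ℝ) :
    (rot α).mulVec v = ![v 0, Real.cos α * v 1 - Real.sin α * v 2,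
      Real.sin α * v 1 + Real.cos α * v 2] := by
  funext i
  fin_cases i <;>
    simp [rot, Matrix.mulVec, dotProduct, Fin.sum_univ_three, Matrix.vecHead, Matrix.vecTail] <;> ring

lemma rot_mem_SOplus (α : ℝ) : rot α ∈ SOplus := by
  refine ⟨?_, ?_, ?_⟩
  · have ht : (rot α).transpose = !![1,0,0; 0, Real.cos α, Real.sin α; 0, -Real.sin α, Real.cos α] := by
      ext i j
      fin_cases i <;> fin_cases j <;> simp [rot, Matrix.vecHead, Matrix.vecTail]
    rw [ht, rot, minkMatrix, Matrix.mul_fin_three, Matrix.mul_fin_three]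
    ext i j
    fin_cases i <;> fin_cases j <;>
      simp [Matrix.vecHead, Matrix.vecTail] <;>
      linarith [Real.sin_sq_add_cos_sq α]
  · simp [rot, Matrix.det_fin_three]
    linear_combination Real.sin_sq_add_cos_sq α
  · simp [rot]

lemma mem_rot_wedge (r α : ℝ) (x : Fin 3 → ℝ) :
    x ∈ (fun v => (rot α).mulVec v) '' wedge1 r ↔
      x ∈ deSitter r ∧ |x 0| < x 2 * Real.cos α - x 1 * Real.sin α := by
  constructor
  · rintro ⟨v, ⟨hvdS, hvw⟩, rfl⟩
    dsimp only
    rw [rot_mulVec]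
    have hds : mink v v = -r^2 := hvdS
    constructor
    · show mink _ _ = -r^2
      simp only [mink, Matrix.cons_val_zero, Matrix.cons_val_one, Matrix.head_cons,
        Matrix.cons_val_two, Matrix.tail_cons]
      rw [← hds]; simp only [mink]
      linear_combination (-(v 1^2) - v 2^2) * (Real.sin_sq_add_cos_sq α)
    · simp only [Matrix.cons_val_zero, Matrix.cons_val_one, Matrix.head_cons,
        Matrix.cons_val_two, Matrix.tail_cons]
      have : (Real.sin α * v 1 + Real.cos α * v 2) * Real.cos α -
          (Real.cos α * v 1 - Real.sin α * v 2) * Real.sin α = v 2 := by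
        linear_combination (v 2) * (Real.sin_sq_add_cos_sq α)
      rw [this]; exact hvw
  · rintro ⟨hdS, hw⟩
    refine ⟨(rot (-α)).mulVec x, ⟨?_, ?_⟩, ?_⟩
    · show mink _ _ = -r^2
      rw [rot_mulVec]
      have hds : mink x x = -r^2 := hdS
      simp only [mink, Matrix.cons_val_zero, Matrix.cons_val_one, Matrix.head_cons,
        Matrix.cons_val_two, Matrix.tail_cons, Real.cos_neg, Real.sin_neg]
      rw [← hds]; simp only [mink]
      linear_combination (-(x 1^2) - x 2^2) * (Real.sin_sq_add_cos_sq α)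
    · rw [rot_mulVec]
      simp only [Matrix.cons_val_zero, Matrix.cons_val_one, Matrix.head_cons,
        Matrix.cons_val_two, Matrix.tail_cons, Real.cos_neg, Real.sin_neg]
      calc |x 0| < x 2 * Real.cos α - x 1 * Real.sin α := hw
        _ = -Real.sin α * x 1 + Real.cos α * x 2 := by ring
    · dsimp only
      rw [rot_mulVec, rot_mulVec]
      funext i
      fin_cases i
      · simp
      · simp [Real.cos_neg, Real.sin_neg, Matrix.vecHead, Matrix.vecTail]
        linear_combination (x 1) * (Real.sin_sq_add_cos_sq α)
      · simp [Real.cos_neg, Real.sin_neg, Matrix.vecHead, Matrix.vecTail]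
        linear_combination (x 2) * (Real.sin_sq_add_cos_sq α)
lemma mink_sub_self (x y : Fin 3 → ℝ) :
    mink (x - y) (x - y) = mink x x + mink y y - 2 * mink x y := by
  simp only [mink, Pi.sub_apply]; ring

lemma spacelike_iff {r : ℝ} {x y : Fin 3 → ℝ} (hx : x ∈ deSitter r) (hy : y ∈ deSitter r) :
    SpacelikeSep x y ↔ -r ^ 2 < mink x y := by
  have hx' : mink x x = -r ^ 2 := hx
  have hy' : mink y y = -r ^ 2 := hy
  unfold SpacelikeSep
  rw [mink_sub_self, hx', hy']
  constructor <;> intro h <;> nlinarith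

lemma arc_mem_dS (r ψ : ℝ) : (![0, r * Real.sin ψ, r * Real.cos ψ]) ∈ deSitter r := by
  show mink _ _ = -r^2
  simp only [mink, Matrix.cons_val_zero, Matrix.cons_val_one, Matrix.head_cons,
    Matrix.cons_val_two, Matrix.tail_cons]
  linear_combination (-(r^2)) * (Real.sin_sq_add_cos_sq ψ)

/-- membership in the causal complement of the arc, characterized. -/
lemma mem_arc_compl (r γ θ : ℝ) (hr : 0 < r) (y : Fin 3 → ℝ) :
    y ∈ causalCompl r
      {x | ∃ ψ ∈ Set.Ioo (γ - θ) (γ + θ), x = ![0, r * Real.sin ψ, r * Real.cos ψ]} ↔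
    y ∈ deSitter r ∧ ∀ ψ ∈ Set.Ioo (γ - θ) (γ + θ),
      y 1 * Real.sin ψ + y 2 * Real.cos ψ < r := by
  constructor
  · rintro ⟨hyds, h2⟩
    refine ⟨hyds, fun ψ hψ => ?_⟩
    have := (spacelike_iff (arc_mem_dS r ψ) hyds).1 (h2 _ ⟨ψ, hψ, rfl⟩)
    simp only [mink, Matrix.cons_val_zero, Matrix.cons_val_one, Matrix.head_cons,
      Matrix.cons_val_two, Matrix.tail_cons] at this
    nlinarith
  · rintro ⟨hyds, h2⟩
    refine ⟨hyds, ?_⟩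
    rintro x ⟨ψ, hψ, rfl⟩
    rw [spacelike_iff (arc_mem_dS r ψ) hyds]
    simp only [mink, Matrix.cons_val_zero, Matrix.cons_val_one, Matrix.head_cons,
      Matrix.cons_val_two, Matrix.tail_cons]
    nlinarith [h2 ψ hψ]

set_option maxHeartbeats 1000000 in
lemma key_P1 (r γ θ α' : ℝ) (hr : 0 < r)
    (hα1 : -(π/2) ≤ α' - θ) (hα2 : α' + θ ≤ π/2)
    (x : Fin 3 → ℝ)
    (hx : x ∈ causalCompl r (causalCompl r
      {p | ∃ ψ ∈ Set.Ioo (γ - θ) (γ + θ), p = ![0, r * Real.sin ψ, r * Real.cos ψ]})) :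
    |x 0| < x 2 * Real.cos (α' - γ) - x 1 * Real.sin (α' - γ) := by
  by_contra hcon
  push_neg at hcon
  set α := α' - γ with hαdef
  set a := x 1 * Real.cos α + x 2 * Real.sin α with hadef
  set b := x 2 * Real.cos α - x 1 * Real.sin α with hbdef
  have hxds : x ∈ deSitter r := hx.1
  have hds : x 0 * x 0 - x 1 * x 1 - x 2 * x 2 = -r^2 := hxds
  have hab : a^2 + b^2 = (x 0)^2 + r^2 := by
    have : a^2 + b^2 = (x 1^2 + x 2^2) * ((Real.sin α)^2 + (Real.cos α)^2) := by
      rw [hadef, hbdef]; ring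
    rw [this, Real.sin_sq_add_cos_sq]; nlinarith [hds]
  -- for ψ in the arc interval, cos (ψ + α - γ) > 0  (i.e. (ψ - γ) + α')
  have hcospos : ∀ ψ ∈ Set.Ioo (γ - θ) (γ + θ), 0 < Real.cos (ψ - γ + α') := by
    intro ψ hψ
    apply Real.cos_pos_of_mem_Ioo
    constructor
    · simp only [Set.mem_Ioo] at hψ; linarith [hψ.1]
    · simp only [Set.mem_Ioo] at hψ; linarith [hψ.2]
  have htrig : ∀ ψ : ℝ, x 1 * Real.sin ψ + x 2 * Real.cos ψ
      = a * Real.sin (ψ - γ + α') + b * Real.cos (ψ - γ + α') := by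
    intro ψ
    have h1 : ψ - γ + α' = ψ + α := by rw [hαdef]; ring
    rw [h1, Real.sin_add, Real.cos_add, hadef, hbdef]
    linear_combination (-(x 1 * Real.sin ψ + x 2 * Real.cos ψ)) * (Real.sin_sq_add_cos_sq (α' - γ))
  rcases lt_or_ge b (-|x 0|) with hb2 | hb2
  · -- x itself is in the causal complement of the arc
    have hbneg : b < 0 := lt_of_lt_of_le hb2 (by simp [neg_nonpos, abs_nonneg])
    have ha2 : a^2 < r^2 := by nlinarith [abs_nonneg (x 0), sq_abs (x 0)]
    have har : |a| < r := by
      cases' abs_cases a with h h <;> nlinarith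
    have hxI' : x ∈ causalCompl r
        {p | ∃ ψ ∈ Set.Ioo (γ - θ) (γ + θ), p = ![0, r * Real.sin ψ, r * Real.cos ψ]} := by
      rw [mem_arc_compl r γ θ hr]
      refine ⟨hxds, fun ψ hψ => ?_⟩
      rw [htrig ψ]
      have hc := hcospos ψ hψ
      have hs1 : a * Real.sin (ψ - γ + α') ≤ |a| := by
        rcases abs_cases a with ⟨h1, h2⟩ | ⟨h1, h2⟩ <;>
          nlinarith [Real.sin_le_one (ψ - γ + α'), Real.neg_one_le_sin (ψ - γ + α')]
      nlinarith [mul_pos (neg_pos.2 hbneg) hc]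
    have := hx.2 x hxI'
    simp only [SpacelikeSep, sub_self] at this
    simp only [mink] at this
    norm_num at this
  · -- corner point
    have hb3 : b^2 ≤ (x 0)^2 := by
      cases' abs_cases (x 0) with h h <;> nlinarith
    have ha2 : r^2 ≤ a^2 := by nlinarith
    have hsinlt : ∀ ψ ∈ Set.Ioo (γ - θ) (γ + θ), (Real.sin (ψ - γ + α'))^2 < 1 := by
      intro ψ hψ
      nlinarith [hcospos ψ hψ, Real.sin_sq_add_cos_sq (ψ - γ + α')]
    rcases le_or_gt 0 a with ha | ha
    · have har : r ≤ a := by nlinarith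
      have hyI' : (![0, r * Real.cos α, r * Real.sin α]) ∈ causalCompl r
          {p | ∃ ψ ∈ Set.Ioo (γ - θ) (γ + θ), p = ![0, r * Real.sin ψ, r * Real.cos ψ]} := by
        rw [mem_arc_compl r γ θ hr]
        constructor
        · show mink _ _ = -r^2
          simp only [mink, Matrix.cons_val_zero, Matrix.cons_val_one, Matrix.head_cons,
            Matrix.cons_val_two, Matrix.tail_cons]
          linear_combination (-(r^2)) * (Real.sin_sq_add_cos_sq α)
        · intro ψ hψ
          simp only [Matrix.cons_val_zero, Matrix.cons_val_one, Matrix.head_cons,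
            Matrix.cons_val_two, Matrix.tail_cons]
          have h1 : r * Real.cos α * Real.sin ψ + r * Real.sin α * Real.cos ψ
              = r * Real.sin (ψ - γ + α') := by
            have h2 : ψ - γ + α' = ψ + α := by rw [hαdef]; ring
            rw [h2, Real.sin_add]; ring
          rw [h1]
          nlinarith [hsinlt ψ hψ, Real.sin_le_one (ψ - γ + α'), Real.neg_one_le_sin (ψ - γ + α')]
      have hsp := (spacelike_iff (hyI'.1) hxds).1 (hx.2 _ hyI')
      simp only [mink, Matrix.cons_val_zero, Matrix.cons_val_one, Matrix.head_cons,
        Matrix.cons_val_two, Matrix.tail_cons] at hsp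
      -- mink y x = - r * a
      have : 0 * x 0 - r * Real.cos α * x 1 - r * Real.sin α * x 2 = -(r * a) := by
        rw [hadef]; ring
      rw [this] at hsp
      nlinarith
    · have har : a ≤ -r := by nlinarith
      have hyI' : (![0, -(r * Real.cos α), -(r * Real.sin α)]) ∈ causalCompl r
          {p | ∃ ψ ∈ Set.Ioo (γ - θ) (γ + θ), p = ![0, r * Real.sin ψ, r * Real.cos ψ]} := by
        rw [mem_arc_compl r γ θ hr]
        constructor
        · show mink _ _ = -r^2
          simp only [mink, Matrix.cons_val_zero, Matrix.cons_val_one, Matrix.head_cons,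
            Matrix.cons_val_two, Matrix.tail_cons]
          linear_combination (-(r^2)) * (Real.sin_sq_add_cos_sq α)
        · intro ψ hψ
          simp only [Matrix.cons_val_zero, Matrix.cons_val_one, Matrix.head_cons,
            Matrix.cons_val_two, Matrix.tail_cons]
          have h1 : -(r * Real.cos α) * Real.sin ψ + -(r * Real.sin α) * Real.cos ψ
              = -(r * Real.sin (ψ - γ + α')) := by
            have h2 : ψ - γ + α' = ψ + α := by rw [hαdef]; ring
            rw [h2, Real.sin_add]; ring
          rw [h1]
          nlinarith [hsinlt ψ hψ, Real.sin_le_one (ψ - γ + α'), Real.neg_one_le_sin (ψ - γ + α')]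
      have hsp := (spacelike_iff (hyI'.1) hxds).1 (hx.2 _ hyI')
      simp only [mink, Matrix.cons_val_zero, Matrix.cons_val_one, Matrix.head_cons,
        Matrix.cons_val_two, Matrix.tail_cons] at hsp
      have : 0 * x 0 - -(r * Real.cos α) * x 1 - -(r * Real.sin α) * x 2 = r * a := by
        rw [hadef]; ring
      rw [this] at hsp
      nlinarith
lemma limits (v1 v2 r θ : ℝ) (hθ1 : 0 < θ)
    (harc : ∀ φ ∈ Set.Ioo (-θ) θ, v1 * Real.sin φ + v2 * Real.cos φ < r) :
    v1 * Real.sin θ + v2 * Real.cos θ ≤ r ∧ -(v1 * Real.sin θ) + v2 * Real.cos θ ≤ r := by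
  have hcont : Continuous (fun φ : ℝ => v1 * Real.sin φ + v2 * Real.cos φ) := by continuity
  constructor
  · have ht : Tendsto (fun φ : ℝ => v1 * Real.sin φ + v2 * Real.cos φ)
        (nhdsWithin θ (Set.Iio θ)) (nhds (v1 * Real.sin θ + v2 * Real.cos θ)) :=
      (hcont.tendsto θ).mono_left nhdsWithin_le_nhds
    refine le_of_tendsto ht ?_
    filter_upwards [Ioo_mem_nhdsLT_of_mem (⟨by linarith, le_refl θ⟩ : θ ∈ Set.Ioc (-θ) θ)]
      with φ hφ using (harc φ hφ).le
  · have ht : Tendsto (fun φ : ℝ => v1 * Real.sin φ + v2 * Real.cos φ)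
        (nhdsWithin (-θ) (Set.Ioi (-θ))) (nhds (v1 * Real.sin (-θ) + v2 * Real.cos (-θ))) :=
      (hcont.tendsto (-θ)).mono_left nhdsWithin_le_nhds
    have h2 : v1 * Real.sin (-θ) + v2 * Real.cos (-θ) ≤ r := by
      refine le_of_tendsto ht ?_
      filter_upwards [Ioo_mem_nhdsGT_of_mem (⟨le_refl (-θ), by linarith⟩ : -θ ∈ Set.Ico (-θ) θ)]
        with φ hφ using (harc φ hφ).le
    rw [Real.sin_neg, Real.cos_neg] at h2; linarith

lemma hY_lemma (v1 v2 r θ : ℝ) (hr : 0 < r) (hθ1 : 0 < θ) (hθ2 : θ ≤ π/2)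
    (hρ : r^2 ≤ v1^2 + v2^2)
    (harc : ∀ φ ∈ Set.Ioo (-θ) θ, v1 * Real.sin φ + v2 * Real.cos φ < r) :
    Real.sin θ * v2 ≤ Real.cos θ * |v1| := by
  by_contra hcon
  push_neg at hcon
  have hs : 0 < Real.sin θ := by
    apply Real.sin_pos_of_pos_of_lt_pi hθ1; nlinarith [Real.pi_pos]
  have hc : 0 ≤ Real.cos θ := by
    apply Real.cos_nonneg_of_mem_Icc; constructor <;> nlinarith [Real.pi_pos]
  have hv2 : 0 < v2 := by nlinarith [abs_nonneg v1, mul_nonneg hc (abs_nonneg v1)]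
  set tt := v1 / v2 with htt
  have hbound : Real.arctan tt < θ ∧ -θ < Real.arctan tt := by
    rcases eq_or_lt_of_le hc with hc0 | hcpos
    · have hθeq : θ = π/2 := by
        by_contra hne
        have : 0 < Real.cos θ := Real.cos_pos_of_mem_Ioo
          ⟨by nlinarith [Real.pi_pos], lt_of_le_of_ne hθ2 hne⟩
        linarith [hc0]
      rw [hθeq]
      exact ⟨Real.arctan_lt_pi_div_two tt, by simpa using Real.neg_pi_div_two_lt_arctan tt⟩
    · have hθpi : θ < π/2 := by
        rcases eq_or_lt_of_le hθ2 with h | h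
        · exfalso; rw [h] at hcpos; simp [Real.cos_pi_div_two] at hcpos
        · exact h
      have h5 : tt < Real.sin θ / Real.cos θ := by
        rw [htt, div_lt_div_iff₀ hv2 hcpos]
        nlinarith [le_abs_self v1]
      have h6 : -(Real.sin θ / Real.cos θ) < tt := by
        rw [htt, neg_lt, ← neg_div, div_lt_div_iff₀ hv2 hcpos]
        nlinarith [neg_abs_le v1]
      have harct : Real.arctan (Real.sin θ / Real.cos θ) = θ := by
        rw [← Real.tan_eq_sin_div_cos, Real.arctan_tan (by nlinarith [Real.pi_pos]) hθpi]
      refine ⟨?_, ?_⟩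
      · calc Real.arctan tt < Real.arctan (Real.sin θ / Real.cos θ) :=
            Real.arctan_strictMono h5
          _ = θ := harct
      · have h7 := Real.arctan_strictMono h6
        rw [Real.arctan_neg, harct] at h7
        linarith
  have harc' := harc (Real.arctan tt) ⟨hbound.2, hbound.1⟩
  rw [Real.sin_arctan, Real.cos_arctan] at harc'
  have hS : 0 < Real.sqrt (1 + tt^2) := by positivity
  have h1t : Real.sqrt (1 + tt^2) * v2 = Real.sqrt (v1^2 + v2^2) := by
    have hid : (1 + tt^2) * v2^2 = v1^2 + v2^2 := by
      rw [htt]; field_simp; ring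
    rw [← hid, Real.sqrt_mul (by positivity) (v2^2), Real.sqrt_sq hv2.le]
  have hval : v1 * (tt / Real.sqrt (1 + tt^2)) + v2 * (1 / Real.sqrt (1 + tt^2))
      = Real.sqrt (v1^2 + v2^2) := by
    have : v1 * tt + v2 = (v1^2 + v2^2) / v2 := by rw [htt]; field_simp
    have h8 : v1 * (tt / Real.sqrt (1 + tt^2)) + v2 * (1 / Real.sqrt (1 + tt^2))
        = (v1 * tt + v2) / Real.sqrt (1 + tt^2) := by ring
    rw [h8, this, div_div, mul_comm v2 (Real.sqrt (1+tt^2)), h1t, Real.div_sqrt]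
  rw [hval] at harc'
  have : r ≤ Real.sqrt (v1^2+v2^2) := Real.le_sqrt' hr |>.2 hρ
  linarith

set_option maxHeartbeats 1600000 in
lemma key_P2 (r γ θ : ℝ) (hr : 0 < r) (hθ1 : 0 < θ) (hθ2 : θ ≤ π/2)
    (x y : Fin 3 → ℝ) (hxds : x ∈ deSitter r)
    (hw1 : |x 0| < x 2 * Real.cos ((π/2 - θ) - γ) - x 1 * Real.sin ((π/2 - θ) - γ))
    (hw2 : |x 0| < x 2 * Real.cos ((θ - π/2) - γ) - x 1 * Real.sin ((θ - π/2) - γ))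
    (hy : y ∈ causalCompl r
      {p | ∃ ψ ∈ Set.Ioo (γ - θ) (γ + θ), p = ![0, r * Real.sin ψ, r * Real.cos ψ]}) :
    SpacelikeSep y x := by
  obtain ⟨hyds, hy2⟩ := (mem_arc_compl r γ θ hr y).1 hy
  set s := Real.sin θ with hsdef
  set c := Real.cos θ with hcdef
  have hs : 0 < s := by
    rw [hsdef]; apply Real.sin_pos_of_pos_of_lt_pi hθ1; nlinarith [Real.pi_pos]
  have hc : 0 ≤ c := by
    rw [hcdef]; apply Real.cos_nonneg_of_mem_Icc; constructor <;> nlinarith [Real.pi_pos]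
  have hsc : s^2 + c^2 = 1 := Real.sin_sq_add_cos_sq θ
  set u1 := x 1 * Real.cos γ - x 2 * Real.sin γ with hu1
  set u2 := x 1 * Real.sin γ + x 2 * Real.cos γ with hu2
  set v1 := y 1 * Real.cos γ - y 2 * Real.sin γ with hv1
  set v2 := y 1 * Real.sin γ + y 2 * Real.cos γ with hv2
  have hdsx : x 0 * x 0 - x 1 * x 1 - x 2 * x 2 = -r^2 := hxds
  have hdsy : y 0 * y 0 - y 1 * y 1 - y 2 * y 2 = -r^2 := hyds
  have hu : u1^2 + u2^2 = (x 0)^2 + r^2 := by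
    rw [hu1, hu2]
    linear_combination (x 1^2 + x 2^2) * (Real.sin_sq_add_cos_sq γ) - hdsx
  have hv : v1^2 + v2^2 = (y 0)^2 + r^2 := by
    rw [hv1, hv2]
    linear_combination (y 1^2 + y 2^2) * (Real.sin_sq_add_cos_sq γ) - hdsy
  -- translate wedge conditions
  have hw1' : |x 0| < s * u2 - c * u1 := by
    have e1 : x 2 * Real.cos ((π/2 - θ) - γ) - x 1 * Real.sin ((π/2 - θ) - γ)
        = s * u2 - c * u1 := by
      rw [hu1, hu2, hsdef, hcdef, show π/2 - θ - γ = π/2 - (θ + γ) by ring,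
        Real.cos_pi_div_two_sub, Real.sin_pi_div_two_sub, Real.sin_add, Real.cos_add]
      ring
    rwa [e1] at hw1
  have hw2' : |x 0| < s * u2 + c * u1 := by
    have e1 : x 2 * Real.cos ((θ - π/2) - γ) - x 1 * Real.sin ((θ - π/2) - γ)
        = s * u2 + c * u1 := by
      rw [hu1, hu2, hsdef, hcdef, show θ - π/2 - γ = -(π/2 - (θ - γ)) by ring,
        Real.cos_neg, Real.sin_neg, Real.cos_pi_div_two_sub, Real.sin_pi_div_two_sub,
        Real.sin_sub, Real.cos_sub]
      ring
    rwa [e1] at hw2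
  -- arc condition in rotated coordinates
  have harc : ∀ φ ∈ Set.Ioo (-θ) θ, v1 * Real.sin φ + v2 * Real.cos φ < r := by
    intro φ hφ
    have h0 := hy2 (γ + φ) ⟨by simp only [Set.mem_Ioo] at hφ; linarith [hφ.1],
      by simp only [Set.mem_Ioo] at hφ; linarith [hφ.2]⟩
    have e1 : y 1 * Real.sin (γ + φ) + y 2 * Real.cos (γ + φ)
        = v1 * Real.sin φ + v2 * Real.cos φ := by
      rw [hv1, hv2, Real.sin_add, Real.cos_add]; ring
    rwa [e1] at h0
  have hlim := limits v1 v2 r θ hθ1 harc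
  have hYl : s * v2 ≤ c * |v1| := hY_lemma v1 v2 r θ hr hθ1 hθ2
    (by linarith [hv, sq_nonneg (y 0)]) harc
  -- set up lemA variables
  set T := |x 0| with hT
  set W := |y 0| with hW
  set A := |u1| with hA
  set M := |v1| with hM
  set a := s * u2 - c * A with ha
  set b := c * u2 + s * A with hb
  set m := c * M - s * v2 with hm
  set n := c * v2 + s * M with hn
  have hTa : T < a := by
    rw [ha, hA]
    rcases abs_cases u1 with ⟨h1, _⟩ | ⟨h1, _⟩ <;> rw [h1] <;> [linarith [hw1']; linarith [hw2']]
  have hT0 : 0 ≤ T := abs_nonneg _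
  have hsu2 : 0 < s * u2 := by
    have h0 := abs_nonneg (x 0)
    linarith [hw1', hw2']
  have hu2pos : 0 < u2 := by
    rcases le_or_gt u2 0 with h | h
    · linarith [mul_nonpos_of_nonneg_of_nonpos hs.le h, hsu2]
    · exact h
  have hb0 : 0 ≤ b := by
    rw [hb]
    linarith [mul_nonneg hc hu2pos.le, mul_nonneg hs.le (abs_nonneg u1)]
  have hm0 : 0 ≤ m := by rw [hm, hM]; linarith [hYl]
  have hn0 : n ≤ r := by
    rw [hn, hM]
    rcases abs_cases v1 with ⟨h1, _⟩ | ⟨h1, _⟩ <;> rw [h1] <;> [linarith [hlim.1]; linarith [hlim.2]]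
  have hW0 : 0 ≤ W := abs_nonneg _
  have h1 : a^2 + b^2 = T^2 + r^2 := by
    rw [ha, hb, hT]
    have e1 : (s*u2 - c*A)^2 + (c*u2 + s*A)^2 = (s^2+c^2) * (u2^2 + A^2) := by ring
    rw [e1, hsc, hA, sq_abs, sq_abs]
    linarith [hu]
  have h2 : m^2 + n^2 = W^2 + r^2 := by
    rw [hm, hn, hW]
    have e1 : (c*M - s*v2)^2 + (c*v2 + s*M)^2 = (s^2+c^2) * (M^2 + v2^2) := by ring
    rw [e1, hsc, hM, sq_abs, sq_abs]
    linarith [hv]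
  have hK : 0 ≤ a*n + b*m := by
    have hKid : a*n + b*m = u2*M - A*v2 := by
      rw [ha, hb, hm, hn]; linear_combination (u2*M - A*v2) * hsc
    rw [hKid]
    rcases le_or_gt v2 0 with hv20 | hv20
    · have g1 := mul_nonneg hu2pos.le (abs_nonneg v1)
      have g2 := mul_nonneg (abs_nonneg u1) (neg_nonneg.2 hv20)
      rw [hM, hA]; linarith [g1, g2]
    · have f1 : A*s*(s*v2) ≤ A*s*(c*M) := by
        apply mul_le_mul_of_nonneg_left _ (mul_nonneg (abs_nonneg u1) hs.le)
        rw [hM]; linarith [hYl]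
      have f2 : 0 ≤ s*M*(s*u2 - c*A) := by
        apply mul_nonneg (mul_nonneg hs.le (abs_nonneg v1))
        linarith [hTa, hT0]
      have f3 : 0 ≤ s*s*(u2*M - A*v2) := by linarith [f1, f2, (by ring :
        s*M*(s*u2 - c*A) + (A*s*(c*M) - A*s*(s*v2)) = s*s*(u2*M - A*v2))]
      have f4 : 0 < s*s := mul_pos hs hs
      rcases le_or_gt 0 (u2*M - A*v2) with h | h
      · linarith
      · exfalso
        have := mul_neg_of_pos_of_neg f4 h
        linarith
  have hlemA := lemA r T W a b m n hr hT0 hTa hb0 hm0 hn0 hW0 h1 h2 hK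
  -- conclude
  have hPid : b*n - a*m = A*M + u2*v2 := by
    rw [ha, hb, hm, hn]; linear_combination (A*M + u2*v2) * hsc
  have hP : u1*v1 + u2*v2 ≤ b*n - a*m := by
    rw [hPid, hA, hM]
    have : u1*v1 ≤ |u1 * v1| := le_abs_self _
    rw [abs_mul] at this
    linarith
  have hdot : y 1 * x 1 + y 2 * x 2 = u1*v1 + u2*v2 := by
    rw [hu1, hu2, hv1, hv2]
    linear_combination (-(x 1 * y 1) - x 2 * y 2) * (Real.sin_sq_add_cos_sq γ)
  rw [spacelike_iff hyds hxds]
  show -r^2 < y 0 * x 0 - y 1 * x 1 - y 2 * x 2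
  have habs : -(T*W) ≤ y 0 * x 0 := by
    rw [hT, hW]
    calc -(|x 0| * |y 0|) = -(|y 0 * x 0|) := by rw [abs_mul]; ring_nf
      _ ≤ y 0 * x 0 := neg_abs_le _
  linarith [hlemA, hP, hdot, habs]

/-- For `γ ∈ ℝ`, `θ ∈ (0, π/2]`, let
`I = {(0, r·sin ψ, r·cos ψ) : γ − θ < ψ < γ + θ}` be an open arc on the time-zero circle
of `dS` of length `2θr ≤ πr`, with causal completion `O_I = I″`. Then the intersection
of all wedges containing `O_I` equals `O_I` itself. -/
theorem intersection_of_wedges_eq_double_cone (r : ℝ) (hr : 0 < r) (γ θ : ℝ)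
    (hθ : θ ∈ Set.Ioc 0 (Real.pi / 2))
    (OI : Set (Fin 3 → ℝ))
    (hOI : OI = causalCompl r (causalCompl r
      {x | ∃ ψ ∈ Set.Ioo (γ - θ) (γ + θ), x = ![0, r * Real.sin ψ, r * Real.cos ψ]})) :
    ⋂₀ {S : Set (Fin 3 → ℝ) |
        ∃ Λ ∈ SOplus, S = (fun x => Λ.mulVec x) '' wedge1 r ∧ OI ⊆ S} = OI := by
  obtain ⟨hθ1, hθ2⟩ := hθ
  subst hOI
  apply subset_antisymm
  · intro x hx
    have hsub : ∀ α' : ℝ, -(π/2) ≤ α' - θ → α' + θ ≤ π/2 →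
        causalCompl r (causalCompl r
          {p | ∃ ψ ∈ Set.Ioo (γ - θ) (γ + θ), p = ![0, r * Real.sin ψ, r * Real.cos ψ]}) ⊆
          (fun v => (rot (α' - γ)).mulVec v) '' wedge1 r := by
      intro α' h1 h2 z hz
      rw [mem_rot_wedge]
      exact ⟨hz.1, key_P1 r γ θ α' hr h1 h2 z hz⟩
    have hx1 := (Set.mem_sInter.1 hx) _
      ⟨rot ((π/2 - θ) - γ), rot_mem_SOplus _, rfl, hsub (π/2 - θ) (by linarith) (by linarith)⟩
    have hx2 := (Set.mem_sInter.1 hx) _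
      ⟨rot ((θ - π/2) - γ), rot_mem_SOplus _, rfl, hsub (θ - π/2) (by linarith) (by linarith)⟩
    rw [mem_rot_wedge] at hx1 hx2
    exact ⟨hx1.1, fun y hy => key_P2 r γ θ hr hθ1 hθ2 x y hx1.1 hx1.2 hx2.2 hy⟩
  · intro x hx S hS
    obtain ⟨Λ, _, rfl, hsub⟩ := hS
    exact hsub hx
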